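/- arXiv:2307.13813 — 3 statements merged into one kernel-verified Lean document; each statement's English description precedes it below -/
import Mathlib

section
/- Let d ≥ 1, let θ_0, ζ_0, g ∈ ℝ^d, let η ∈ ℝ and ρ ∈ ℝ, and define sequences by θ_{k+1} = θ_k − η·g and ζ_{k+1} = ρ·ζ_k + (1−ρ)·θ_k. Then for every natural number κ, θ_κ = θ_0 − η·κ·g and ζ_κ = ρ^κ·ζ_0 + (1−ρ^κ)·θ_0 − η·(∑_{i=1}^{κ−1} (1 − ρ^i))·g. -/
lemma sgd_ema_geom (ρ : ℝ) (k : ℕ) :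
    (1 - ρ) * ∑ i ∈ Finset.Ico 1 k, (1 - ρ ^ i) = (1 - ρ) * k - (1 - ρ ^ k) := by
  induction k with
  | zero => simp
  | succ n ihn =>
    rcases Nat.eq_zero_or_pos n with hn | hn
    · subst hn; simp
    · rw [Finset.sum_Ico_succ_top hn]
      push_cast
      rw [mul_add, ihn, pow_succ]
      ring

/-- Iterations of SGD + EMA with constant gradient: closed form for the target
parameters `θ` and the EMA parameters `ζ` after `κ` steps. -/
theorem sgd_ema_iterations (d : ℕ) (hd : 1 ≤ d)
    (θ0 ζ0 g : Fin d → ℝ) (η ρ : ℝ)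
    (θ ζ : ℕ → Fin d → ℝ)
    (hθ0 : θ 0 = θ0) (hζ0 : ζ 0 = ζ0)
    (hθ : ∀ k, θ (k + 1) = θ k - η • g)
    (hζ : ∀ k, ζ (k + 1) = ρ • ζ k + (1 - ρ) • θ k) :
    ∀ κ : ℕ,
      θ κ = θ0 - (η * κ) • g ∧
      ζ κ = ρ ^ κ • ζ0 + (1 - ρ ^ κ) • θ0
            - (η * ∑ i ∈ Finset.Ico 1 κ, (1 - ρ ^ i)) • g := by
  intro κ
  induction κ with
  | zero =>
    constructor
    · simp [hθ0]
    · simp [hζ0]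
  | succ k ih =>
    obtain ⟨ihθ, ihζ⟩ := ih
    have hsum : ∑ i ∈ Finset.Ico 1 (k + 1), (1 - ρ ^ i)
        = (∑ i ∈ Finset.Ico 1 k, (1 - ρ ^ i)) + (1 - ρ ^ k) := by
      rcases Nat.eq_zero_or_pos k with hk | hk
      · subst hk; simp
      · rw [Finset.sum_Ico_succ_top hk]
    constructor
    · rw [hθ k, ihθ]
      funext x
      simp only [Pi.sub_apply, Pi.smul_apply, smul_eq_mul, Nat.cast_succ]
      ring
    · have hgeom := sgd_ema_geom ρ k
      rw [hζ k, ihθ, ihζ, hsum]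
      funext x
      simp only [Pi.add_apply, Pi.sub_apply, Pi.smul_apply, smul_eq_mul, pow_succ]
      linear_combination (η * g x) * hgeom
end

section
/- For every real ρ with 0 ≤ ρ ≤ 1 and every natural number κ ≥ 1, one has 0 ≤ ∑_{i=1}^{κ−1} (1 − ρ^i) ≤ (κ(κ−1)/2)·(1 − ρ). Consequently, for any η ≥ 0 the EMA Scaling Rule error satisfies |−η ∑_{i=1}^{κ−1}(1−ρ^i)| ≤ η·(κ(κ−1)/2)·(1−ρ). -/
/-- Bound on the EMA Scaling Rule error coefficient: for `0 ≤ ρ ≤ 1` and `κ ≥ 1`,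
`0 ≤ ∑_{i=1}^{κ-1}(1-ρ^i) ≤ (κ(κ-1)/2)(1-ρ)`, and hence for `η ≥ 0` the error
`-η ∑_{i=1}^{κ-1}(1-ρ^i)` has absolute value at most `η (κ(κ-1)/2)(1-ρ)`. -/
theorem ema_error_bound (ρ : ℝ) (hρ0 : 0 ≤ ρ) (hρ1 : ρ ≤ 1) (κ : ℕ) (hκ : 1 ≤ κ) :
    (0 ≤ ∑ i ∈ Finset.Ico 1 κ, (1 - ρ ^ i) ∧
      ∑ i ∈ Finset.Ico 1 κ, (1 - ρ ^ i) ≤ ((κ : ℝ) * ((κ : ℝ) - 1) / 2) * (1 - ρ)) ∧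
    ∀ η : ℝ, 0 ≤ η →
      |-(η * ∑ i ∈ Finset.Ico 1 κ, (1 - ρ ^ i))|
        ≤ η * (((κ : ℝ) * ((κ : ℝ) - 1) / 2) * (1 - ρ)) := by
  have hnn : 0 ≤ ∑ i ∈ Finset.Ico 1 κ, (1 - ρ ^ i) := by
    apply Finset.sum_nonneg
    intro i _
    have : ρ ^ i ≤ 1 := pow_le_one₀ hρ0 hρ1
    linarith
  have hterm : ∀ i ∈ Finset.Ico 1 κ, (1 - ρ ^ i) ≤ (i : ℝ) * (1 - ρ) := by
    intro i _
    have hb := one_add_mul_le_pow (a := ρ - 1) (by linarith) i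
    rw [show (1:ℝ) + (ρ - 1) = ρ by ring] at hb
    nlinarith
  have hgauss : ∀ n : ℕ, ∑ i ∈ Finset.Ico 1 n, ((i : ℝ)) = (n : ℝ) * ((n : ℝ) - 1) / 2 := by
    intro n
    induction n with
    | zero => simp
    | succ m ih =>
      rcases Nat.eq_zero_or_pos m with rfl | hm
      · simp
      · rw [Finset.sum_Ico_succ_top hm, ih]
        push_cast
        ring
  have hsum : ∑ i ∈ Finset.Ico 1 κ, ((i : ℝ) * (1 - ρ))
      = ((κ : ℝ) * ((κ : ℝ) - 1) / 2) * (1 - ρ) := by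
    rw [← Finset.sum_mul, hgauss]
  have hub : ∑ i ∈ Finset.Ico 1 κ, (1 - ρ ^ i) ≤ ((κ : ℝ) * ((κ : ℝ) - 1) / 2) * (1 - ρ) := by
    calc ∑ i ∈ Finset.Ico 1 κ, (1 - ρ ^ i) ≤ ∑ i ∈ Finset.Ico 1 κ, ((i : ℝ) * (1 - ρ)) :=
          Finset.sum_le_sum hterm
      _ = _ := hsum
  refine ⟨⟨hnn, hub⟩, ?_⟩
  intro η hη
  rw [abs_neg, abs_of_nonneg (mul_nonneg hη hnn)]
  exact mul_le_mul_of_nonneg_left hub hη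
end

section
/- Let a02, a11 be reals with a11 ≠ 1, and let A be the 3×3 real matrix A = [[1, 0, a02], [1−a11, a11, 0], [0, 0, 1]]. Then for every natural number κ ≥ 1, A^κ = [[1, 0, κ·a02], [1 − a11^κ, a11^κ, a02·(κ − (1 − a11^κ)/(1 − a11))], [0, 0, 1]]. -/
open Matrix

/-- Power of the SGD+EMA transition matrix: the `(2,3)` entry is the EMA
Scaling Rule error `a02 (κ - (1 - a11^κ)/(1 - a11))`. -/
theorem sgd_ema_matrix_pow (a02 a11 : ℝ) (ha : a11 ≠ 1) :
    ∀ κ : ℕ, 1 ≤ κ →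
      (!![(1 : ℝ), 0, a02; 1 - a11, a11, 0; 0, 0, 1]) ^ κ =
      !![(1 : ℝ), 0, (κ : ℝ) * a02;
         1 - a11 ^ κ, a11 ^ κ, a02 * ((κ : ℝ) - (1 - a11 ^ κ) / (1 - a11));
         0, 0, 1] := by
  have hs : 1 - a11 ≠ 0 := sub_ne_zero.mpr (Ne.symm ha)
  intro κ hκ
  induction κ with
  | zero => omega
  | succ n ih =>
    rcases Nat.eq_or_lt_of_le hκ with h1 | h1
    · obtain rfl : n = 0 := by omega
      ext i j
      fin_cases i <;> fin_cases j <;>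
        simp [pow_one, div_self hs]
    · have hn : 1 ≤ n := by omega
      rw [pow_succ, ih hn]
      ext i j
      fin_cases i <;> fin_cases j <;>
        simp [Matrix.mul_apply, Fin.sum_univ_three, pow_succ, Nat.cast_succ] <;> (try field_simp) <;>
        ring
end
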